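/- In an Eulerian digraph D with n vertices, the number of oriented spanning trees rooted at a fixed vertex r equals the number of arborescences rooted at r (spanning trees in which from r there is a unique directed path to every vertex). -/

import Mathlib

open Classical

/-- A finite multidigraph: finite vertex and edge types with initial and final
vertex maps. -/
structure Multidigraph where
  V : Type
  E : Type
  [fintV : Fintype V]
  [fintE : Fintype E]
  first : E → V
  last : E → V

attribute [instance] Multidigraph.fintV Multidigraph.fintE

namespace Multidigraph

variable (D : Multidigraph)

/-- The out-degree of a vertex. -/
noncomputable def outdeg (v : D.V) : ℕ := Nat.card {e : D.E // D.first e = v}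

/-- The in-degree of a vertex. -/
noncomputable def indeg (v : D.V) : ℕ := Nat.card {e : D.E // D.last e = v}

/-- Undirected adjacency using only edges in `T`. -/
def Adj (T : Set D.E) (a b : D.V) : Prop :=
  ∃ e ∈ T, (D.first e = a ∧ D.last e = b) ∨ (D.first e = b ∧ D.last e = a)

/-- Undirected reachability using only edges in `T`. -/
def Reach (T : Set D.E) : D.V → D.V → Prop := Relation.ReflTransGen (D.Adj T)

/-- The underlying undirected graph is connected. -/
def Connected : Prop := ∀ a b : D.V, D.Reach Set.univ a b

/-- An Eulerian digraph: connected and with in-degree equal to out-degree at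
every vertex. -/
def Eulerian : Prop := D.Connected ∧ ∀ v : D.V, D.indeg v = D.outdeg v

/-- `T` is a spanning tree of the underlying undirected graph: it connects all
vertices and has `|V| - 1` edges. -/
def IsSpanningTree (T : Set D.E) : Prop :=
  (∀ a b : D.V, D.Reach T a b) ∧ Nat.card T = Nat.card D.V - 1

/-- The out-degree of `v` in the subgraph `T` after reversing the orientations
of the edges in `S`. -/
noncomputable def outdegRev (T S : Set D.E) (v : D.V) : ℕ :=
  Nat.card {e : D.E // (e ∈ T \ S ∧ D.first e = v) ∨ (e ∈ S ∧ D.last e = v)}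

/-- `T` becomes an oriented spanning tree rooted at `r` (every vertex has a
unique directed path to `r`, i.e. every non-root vertex has out-degree `1` and
the root has out-degree `0` in the tree) after reversing exactly the edges of
`S ⊆ T`. -/
def IsOrientedSpanningTreeRev (T S : Set D.E) (r : D.V) : Prop :=
  D.IsSpanningTree T ∧ S ⊆ T ∧ (∀ v : D.V, v ≠ r → D.outdegRev T S v = 1) ∧
    D.outdegRev T S r = 0

/-- `T` is an oriented spanning tree rooted at `r`: every vertex has a unique
directed path to `r`. -/
def IsOrientedSpanningTree (T : Set D.E) (r : D.V) : Prop :=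
  D.IsOrientedSpanningTreeRev T ∅ r

/-- `T` is a `k`-spanning tree rooted at `r`: reversing the orientation of
exactly `k` of its edges yields an oriented spanning tree rooted at `r`. -/
def IsKSpanningTree (T : Set D.E) (r : D.V) (k : ℕ) : Prop :=
  ∃ S : Set D.E, Nat.card S = k ∧ D.IsOrientedSpanningTreeRev T S r

/-- `c D k r` is the number of `k`-spanning trees of `D` rooted at `r`. -/
noncomputable def c (k : ℕ) (r : D.V) : ℕ :=
  Nat.card {T : Set D.E // D.IsKSpanningTree T r k}

/-- The transpose digraph: every edge reversed. -/
def transpose : Multidigraph := { D with first := D.last, last := D.first }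

end Multidigraph


namespace Multidigraph

variable (D : Multidigraph)

/-- The in-degree of `v` within the edge set `T`. -/
noncomputable def indegIn (T : Set D.E) (v : D.V) : ℕ :=
  Nat.card {e : D.E // e ∈ T ∧ D.last e = v}

/-- An arborescence rooted at `r`: a spanning tree with a unique directed path
from `r` to every vertex, i.e. every non-root vertex has in-degree `1` and the
root has in-degree `0` in the tree. -/
def IsArborescence (T : Set D.E) (r : D.V) : Prop :=
  D.IsSpanningTree T ∧ (∀ v : D.V, v ≠ r → D.indegIn T v = 1) ∧ D.indegIn T r = 0

end Multidigraph

/-!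
Row `u` of the reduced out-degree Laplacian `L_r` of `D` is the sum, over the edges `e` leaving
`u`, of the row `δ_u - δ_(last e)`. By multilinearity of the determinant, `det L_r` is the sum,
over all ways `φ` of choosing one out-edge at every vertex `u ≠ r`, of `det (1 - P_φ)`, where
`P_φ` is the 0/1 matrix of `u ↦ last (φ u)`. If following the chosen edges always leads to `r`,
then `1 - P_φ` is block triangular with identity blocks once the vertices are sorted by the
number of steps they need to reach `r`, so its determinant is 1; otherwise the indicator of the vertices that never reach
`r` lies in its kernel. The choices of the first kind are exactly the oriented spanning trees
rooted at `r` (the matrix-tree theorem).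

Arborescences of `D` are the oriented spanning trees of its transpose, so they are counted by the
reduced Laplacian of the transpose; when in-degrees equal out-degrees, that matrix is `L_rᵀ`.
-/

section RootedMaps

open Matrix

variable {V : Type*} {r : V}

noncomputable def extendRoot (r : V) (f : {v // v ≠ r} → V) : V → V :=
  fun v => if h : v = r then r else f ⟨v, h⟩

@[simp]
theorem extendRoot_root (f : {v // v ≠ r} → V) : extendRoot r f r = r := dif_pos rfl

@[simp]
theorem extendRoot_coe (f : {v // v ≠ r} → V) (u : {v // v ≠ r}) : extendRoot r f u = f u :=
  dif_neg u.2

def ReachesRoot (r : V) (f : {v // v ≠ r} → V) : Prop :=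
  ∀ v, ∃ n, (extendRoot r f)^[n] v = r

theorem Function.IsFixedPt.exists_iterate_apply_eq_iff {α : Type*} {g : α → α} {r : α}
    (hr : Function.IsFixedPt g r) (v : α) : (∃ n, g^[n] (g v) = r) ↔ ∃ n, g^[n] v = r := by
  refine ⟨fun ⟨n, hn⟩ => ⟨n + 1, hn⟩, fun ⟨n, hn⟩ => ⟨n, ?_⟩⟩
  rw [← Function.iterate_succ_apply, Function.iterate_succ_apply', hn, hr]

variable [Fintype V]

noncomputable def funMatrix (r : V) (f : {v // v ≠ r} → V) :
    Matrix {v // v ≠ r} {v // v ≠ r} ℤ :=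
  Matrix.of fun u v => if f u = v then 1 else 0

theorem funMatrix_mulVec_comp (f : {v // v ≠ r} → V) {y : V → ℤ} (hy : y r = 0) :
    funMatrix r f *ᵥ (y ∘ Subtype.val) = y ∘ f := by
  ext u
  simp only [mulVec, dotProduct, funMatrix, of_apply, Function.comp_apply, ite_mul, one_mul,
    zero_mul]
  by_cases hfu : f u = r
  · rw [hfu, hy]
    exact Finset.sum_eq_zero fun v _ => if_neg fun h => v.2 h.symm
  · rw [Finset.sum_eq_single_of_mem ⟨f u, hfu⟩ (Finset.mem_univ _), if_pos rfl]
    intro v _ hv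
    exact if_neg fun h => hv (Subtype.ext h.symm)

theorem det_one_sub_funMatrix_of_reachesRoot {f : {v // v ≠ r} → V} (hf : ReachesRoot r f) :
    (1 - funMatrix r f).det = 1 := by
  set depth : {v // v ≠ r} → ℕ := fun u => Nat.find (hf u)
  have depth_lt : ∀ u v : {v // v ≠ r}, f u = v → depth v < depth u := by
    intro u v huv
    have hu : (extendRoot r f)^[depth u] u = r := Nat.find_spec (hf u)
    obtain ⟨n, hn⟩ : ∃ n, depth u = n + 1 :=
      Nat.exists_eq_add_one_of_ne_zero fun h0 => u.2 (by rwa [h0] at hu)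
    rw [hn, Function.iterate_succ_apply, extendRoot_coe, huv] at hu
    exact (Nat.find_le hu).trans_lt (hn ▸ n.lt_succ_self)
  have htri : (1 - funMatrix r f).BlockTriangular (OrderDual.toDual ∘ depth) := by
    intro u v hlt
    have hne : u ≠ v := by rintro rfl; exact lt_irrefl _ hlt
    have hf : f u ≠ v := fun h => (depth_lt u v h).not_gt hlt
    simp [funMatrix, hne, hf]
  rw [htri.det]
  refine Finset.prod_eq_one fun d _ => ?_
  suffices (1 - funMatrix r f).toSquareBlock (OrderDual.toDual ∘ depth) d = 1 by simp [this]
  ext ⟨u, hu⟩ ⟨v, hv⟩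
  have hf : f u ≠ v := fun h => (depth_lt u v h).ne (hv.trans hu.symm)
  simp [toSquareBlock_def, funMatrix, hf, one_apply]

theorem det_one_sub_funMatrix_of_not_reachesRoot {f : {v // v ≠ r} → V}
    (hf : ¬ ReachesRoot r f) : (1 - funMatrix r f).det = 0 := by
  set y : V → ℤ := fun v => if ∃ n, (extendRoot r f)^[n] v = r then 0 else 1
  have hy : y r = 0 := if_pos ⟨0, rfl⟩
  refine exists_mulVec_eq_zero_iff.mp ⟨y ∘ Subtype.val, ?_, ?_⟩
  · obtain ⟨v, hv⟩ := not_forall.mp hf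
    have hvr : v ≠ r := fun h => hv ⟨0, h⟩
    exact Function.ne_iff.mpr ⟨⟨v, hvr⟩, by simp [y, hv]⟩
  · rw [sub_mulVec, one_mulVec, funMatrix_mulVec_comp f hy, sub_eq_zero]
    ext u
    change y u = y (f u)
    rw [← extendRoot_coe f u]
    simp only [y, Function.IsFixedPt.exists_iterate_apply_eq_iff (extendRoot_root f)]

theorem det_one_sub_funMatrix (f : {v // v ≠ r} → V) :
    (1 - funMatrix r f).det = if ReachesRoot r f then 1 else 0 := by
  split_ifs with hf
  · exact det_one_sub_funMatrix_of_reachesRoot hf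
  · exact det_one_sub_funMatrix_of_not_reachesRoot hf

end RootedMaps

namespace Multidigraph

variable {D : Multidigraph} {r : D.V} {T : Set D.E}

theorem Adj.symm {a b : D.V} (h : D.Adj T a b) : D.Adj T b a :=
  let ⟨e, he, h⟩ := h; ⟨e, he, h.symm⟩

theorem Reach.symm {a b : D.V} (h : D.Reach T a b) : D.Reach T b a := by
  induction h with
  | refl => exact .refl
  | tail _ hab ih => exact .head hab.symm ih

theorem Reach.mem_of_mem {S : Set D.V} (hS : ∀ a b, D.Adj T a b → a ∈ S → b ∈ S)
    {a b : D.V} (h : D.Reach T a b) (ha : a ∈ S) : b ∈ S := by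
  induction h with
  | refl => exact ha
  | tail _ hab ih => exact hS _ _ hab ih

theorem outdegRev_empty (v : D.V) :
    D.outdegRev T ∅ v = Nat.card {e : D.E // e ∈ T ∧ D.first e = v} :=
  Nat.card_congr (Equiv.subtypeEquivRight fun e => by simp)

def IsOutEdgeChoice (r : D.V) (φ : {v // v ≠ r} → D.E) : Prop := ∀ u, D.first (φ u) = u

namespace IsOutEdgeChoice

variable {φ : {v // v ≠ r} → D.E} (hφ : D.IsOutEdgeChoice r φ)
include hφ

theorem injective : Function.Injective φ :=
  fun u u' h => Subtype.ext (by rw [← hφ u, h, hφ u'])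

theorem eq_of_range_eq {ψ : {v // v ≠ r} → D.E} (hψ : D.IsOutEdgeChoice r ψ)
    (h : Set.range φ = Set.range ψ) : φ = ψ := by
  funext u
  obtain ⟨u', hu'⟩ : φ u ∈ Set.range ψ := h ▸ Set.mem_range_self u
  obtain rfl : u' = u := Subtype.ext (by rw [← hψ u', hu', hφ u])
  exact hu'.symm

theorem card_range : Nat.card (Set.range φ) = Nat.card D.V - 1 := by
  rw [Nat.card_range_of_injective hφ.injective, Nat.card_eq_fintype_card,
    Fintype.card_subtype_compl, Fintype.card_subtype_eq, Nat.card_eq_fintype_card]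

theorem adj_extendRoot (u : {v // v ≠ r}) :
    D.Adj (Set.range φ) u (extendRoot r (D.last ∘ φ) u) :=
  ⟨φ u, Set.mem_range_self u, Or.inl ⟨hφ u, (extendRoot_coe (D.last ∘ φ) u).symm⟩⟩

theorem reach_root_of_iterate {n : ℕ} {v : D.V}
    (hv : (extendRoot r (D.last ∘ φ))^[n] v = r) : D.Reach (Set.range φ) v r := by
  induction n generalizing v with
  | zero => rw [Function.iterate_zero_apply] at hv; subst hv; exact .refl
  | succ n ih =>
    by_cases hvr : v = r
    · subst hvr; exact .refl
    · exact .head (hφ.adj_extendRoot ⟨v, hvr⟩) (ih hv)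

theorem reach_range_iff :
    (∀ a b, D.Reach (Set.range φ) a b) ↔ ReachesRoot r (D.last ∘ φ) := by
  constructor
  · intro h v
    have key (u : {v // v ≠ r}) :
        (∃ n, (extendRoot r (D.last ∘ φ))^[n] (D.last (φ u)) = r) ↔
          ∃ n, (extendRoot r (D.last ∘ φ))^[n] u = r := by
      simpa using
        Function.IsFixedPt.exists_iterate_apply_eq_iff (extendRoot_root (D.last ∘ φ)) (u : D.V)
    -- an edge of `range φ` joins some `u` to `last (φ u)`: both or neither of them reach `r`
    refine (h r v).mem_of_mem (S := {v | ∃ n, (extendRoot r (D.last ∘ φ))^[n] v = r}) ?_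
      ⟨0, rfl⟩
    rintro a b ⟨_, ⟨u, rfl⟩, ⟨rfl, rfl⟩ | ⟨rfl, rfl⟩⟩
    · rw [hφ u]; exact (key u).mpr
    · rw [hφ u]; exact (key u).mp
  · intro h a b
    obtain ⟨m, hm⟩ := h a
    obtain ⟨n, hn⟩ := h b
    exact (hφ.reach_root_of_iterate hm).trans (hφ.reach_root_of_iterate hn).symm

end IsOutEdgeChoice

theorem exists_isOutEdgeChoice_range_eq_iff :
    (∃ φ, D.IsOutEdgeChoice r φ ∧ Set.range φ = T) ↔
      (∀ v, v ≠ r → Nat.card {e : D.E // e ∈ T ∧ D.first e = v} = 1) ∧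
        Nat.card {e : D.E // e ∈ T ∧ D.first e = r} = 0 := by
  constructor
  · rintro ⟨φ, hφ, rfl⟩
    refine ⟨fun v hv => Nat.card_eq_one_iff_exists.mpr
      ⟨⟨φ ⟨v, hv⟩, ⟨_, rfl⟩, hφ _⟩, ?_⟩, ?_⟩
    · rintro ⟨_, ⟨u, rfl⟩, hu⟩
      obtain rfl : u = ⟨v, hv⟩ := Subtype.ext ((hφ u).symm.trans hu)
      rfl
    · exact Nat.card_eq_zero.mpr
        (.inl ⟨fun ⟨_, ⟨u, rfl⟩, hu⟩ => u.2 ((hφ u).symm.trans hu)⟩)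
  · rintro ⟨hout, hroot⟩
    have hchoice (u : {v // v ≠ r}) : ∃ e, e ∈ T ∧ D.first e = u :=
      let ⟨e, _⟩ := Nat.card_eq_one_iff_exists.mp (hout u u.2); ⟨e, e.2⟩
    choose φ hφT hφ using hchoice
    refine ⟨φ, hφ, Set.Subset.antisymm (Set.range_subset_iff.mpr hφT) fun e he => ?_⟩
    have hne : D.first e ≠ r := fun h =>
      (Nat.card_pos_iff.mpr ⟨⟨⟨e, he, h⟩⟩, inferInstance⟩).ne' hroot
    obtain ⟨_, huniq⟩ := Nat.card_eq_one_iff_exists.mp (hout _ hne)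
    have hφe := huniq ⟨φ ⟨D.first e, hne⟩, hφT _, hφ _⟩
    exact ⟨⟨D.first e, hne⟩, congrArg Subtype.val (hφe.trans (huniq ⟨e, he, rfl⟩).symm)⟩

theorem isOrientedSpanningTree_iff :
    D.IsOrientedSpanningTree T r ↔
      ∃ φ, D.IsOutEdgeChoice r φ ∧ ReachesRoot r (D.last ∘ φ) ∧ Set.range φ = T := by
  simp only [IsOrientedSpanningTree, IsOrientedSpanningTreeRev, IsSpanningTree, outdegRev_empty,
    Set.empty_subset, true_and, ← exists_isOutEdgeChoice_range_eq_iff]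
  constructor
  · rintro ⟨⟨hreach, -⟩, φ, hφ, rfl⟩
    exact ⟨φ, hφ, hφ.reach_range_iff.mp hreach, rfl⟩
  · rintro ⟨φ, hφ, hroot, rfl⟩
    exact ⟨⟨hφ.reach_range_iff.mpr hroot, hφ.card_range⟩, φ, hφ, rfl⟩

theorem card_isOrientedSpanningTree :
    Nat.card {T : Set D.E // D.IsOrientedSpanningTree T r} =
      Nat.card {φ // D.IsOutEdgeChoice r φ ∧ ReachesRoot r (D.last ∘ φ)} := by
  refine (Nat.card_eq_of_bijective
    (fun φ => ⟨Set.range φ.1, isOrientedSpanningTree_iff.mpr ⟨φ.1, φ.2.1, φ.2.2, rfl⟩⟩)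
    ⟨fun φ ψ h => Subtype.ext (φ.2.1.eq_of_range_eq ψ.2.1 (congrArg Subtype.val h)),
      fun T => ?_⟩).symm
  obtain ⟨φ, hφ, hroot, hT⟩ := isOrientedSpanningTree_iff.mp T.2
  exact ⟨⟨φ, hφ, hroot⟩, Subtype.ext hT⟩

section Laplacian

open Matrix Finset

variable (D r) in
noncomputable def reducedLaplacian : Matrix {v // v ≠ r} {v // v ≠ r} ℤ :=
  Matrix.of fun u v =>
    (if u = v then (D.outdeg u : ℤ) else 0) - #{e | D.first e = u ∧ D.last e = v}

theorem reducedLaplacian_apply_eq_sum (u v : {v // v ≠ r}) :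
    D.reducedLaplacian r u v =
      ∑ e with D.first e = u, ((if u = v then 1 else 0) - if D.last e = v then 1 else 0) := by
  rw [sum_sub_distrib, sum_const, sum_boole, filter_filter]
  simp [reducedLaplacian, outdeg, Nat.card_eq_fintype_card, Fintype.card_subtype]

theorem det_reducedLaplacian :
    (D.reducedLaplacian r).det =
      Nat.card {φ // D.IsOutEdgeChoice r φ ∧ ReachesRoot r (D.last ∘ φ)} := by
  let A (u : {v // v ≠ r}) : Finset D.E := {e | D.first e = u}
  let row (u : {v // v ≠ r}) (e : D.E) (v : {v // v ≠ r}) : ℤ :=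
    (if u = v then 1 else 0) - if D.last e = v then 1 else 0
  have hrows : D.reducedLaplacian r = fun u => ∑ e ∈ A u, row u e := by
    ext u v
    rw [reducedLaplacian_apply_eq_sum, Finset.sum_apply]
  have hexpand : det (fun u => ∑ e ∈ A u, row u e) =
      ∑ φ ∈ Fintype.piFinset A, det (of fun u => row u (φ u)) :=
    (detRowAlternating : AlternatingMap ℤ _ ℤ {v // v ≠ r}).toMultilinearMap.map_sum_finset row A
  have hpi : Fintype.piFinset A = ({φ | D.IsOutEdgeChoice r φ} : Finset _) := by
    ext φ
    simp [A, IsOutEdgeChoice]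
  rw [hrows, hexpand, hpi]
  change ∑ φ ∈ _, (1 - funMatrix r (D.last ∘ φ)).det = _
  simp only [det_one_sub_funMatrix, sum_boole, filter_filter, Nat.card_eq_fintype_card,
    Fintype.card_subtype]

theorem card_isOrientedSpanningTree_eq_det :
    (Nat.card {T : Set D.E // D.IsOrientedSpanningTree T r} : ℤ) =
      (D.reducedLaplacian r).det := by
  rw [card_isOrientedSpanningTree, det_reducedLaplacian]

theorem reducedLaplacian_transpose (hD : ∀ v, D.indeg v = D.outdeg v) :
    D.transpose.reducedLaplacian r = (D.reducedLaplacian r).transpose := by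
  ext u v
  change (if u = v then (D.indeg u.1 : ℤ) else 0) - #{e | D.last e = u.1 ∧ D.first e = v.1} =
    (if v = u then (D.outdeg v.1 : ℤ) else 0) - #{e | D.first e = v.1 ∧ D.last e = u.1}
  simp only [eq_comm (a := u), and_comm]
  split_ifs with h
  · subst h
    rw [hD v.1]
  · rfl

end Laplacian

theorem adj_transpose {a b : D.V} : D.transpose.Adj T a b ↔ D.Adj T a b := by
  simp only [Adj, transpose]
  exact exists_congr fun e => and_congr_right fun _ => by tauto

theorem reach_transpose {a b : D.V} : D.transpose.Reach T a b ↔ D.Reach T a b :=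
  ⟨fun h => Relation.ReflTransGen.mono (r := D.transpose.Adj T) (p := D.Adj T)
      (fun _ _ => adj_transpose.1) _ _ h,
    fun h => Relation.ReflTransGen.mono (r := D.Adj T) (p := D.transpose.Adj T)
      (fun _ _ => adj_transpose.2) _ _ h⟩

theorem isArborescence_iff_transpose :
    D.IsArborescence T r ↔ D.transpose.IsOrientedSpanningTree T r := by
  have hdeg (v : D.V) : D.transpose.outdegRev T ∅ v = D.indegIn T v :=
    outdegRev_empty (D := D.transpose) v
  exact ⟨fun ⟨⟨hT, hcard⟩, hin, hroot⟩ =>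
      ⟨⟨fun a b => reach_transpose.2 (hT a b), hcard⟩, Set.empty_subset T,
        fun v hv => (hdeg v).trans (hin v hv), (hdeg r).trans hroot⟩,
    fun ⟨⟨hT, hcard⟩, _, hout, hroot⟩ =>
      ⟨⟨fun a b => reach_transpose.1 (hT a b), hcard⟩,
        fun v hv => (hdeg v).symm.trans (hout v hv), (hdeg r).symm.trans hroot⟩⟩

end Multidigraph

/-- In an Eulerian digraph `D`, the number of oriented spanning
trees rooted at `r` equals the number of arborescences rooted at `r`. -/
theorem stmt1 (D : Multidigraph) (hD : D.Eulerian) (r : D.V) :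
    Nat.card {T : Set D.E // D.IsOrientedSpanningTree T r} =
      Nat.card {T : Set D.E // D.IsArborescence T r} := by
  have hdet : (D.transpose.reducedLaplacian r).det = (D.reducedLaplacian r).det := by
    rw [Multidigraph.reducedLaplacian_transpose hD.2]
    exact Matrix.det_transpose _
  have harb := Multidigraph.card_isOrientedSpanningTree_eq_det (D := D.transpose) (r := r)
  rw [hdet, ← Multidigraph.card_isOrientedSpanningTree_eq_det] at harb
  rw [Nat.card_congr (Equiv.subtypeEquivRight fun T => Multidigraph.isArborescence_iff_transpose)]
  exact_mod_cast harb.symm
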